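/- Let K be a field, R a finite dimensional commutative K-algebra, and Λ a finite dimensional K-algebra. If M is a Λ-module with End_Λ(M) local (i.e., M is indecomposable with local endomorphism ring), and K is algebraically closed, then End_{R⊗Λ}(R ⊗_K M) ≅ R ⊗_K End_Λ(M) is a local ring; hence R ⊗_K M is an indecomposable (R⊗_K Λ)-module. -/

import Mathlib

open TensorProduct CategoryTheory

attribute [local instance] RestrictScalars.moduleOrig

section TensorMod
variable (K R Λ : Type) [Field K] [Ring R] [Algebra K R] [Ring Λ] [Algebra K Λ]
variable (M : Type) [AddCommGroup M] [Module Λ M]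

/-- `R ⊗_K M`, where the `Λ`-module `M` is viewed as a `K`-module by restricting scalars. -/
abbrev TensorMod : Type := TensorProduct K R (RestrictScalars K Λ M)

/-- The action of `Λ` on the second factor of `R ⊗_K M`. -/
noncomputable def tensorModEndHom : Λ →+* Module.End K (TensorMod K R Λ M) where
  toFun a := (Module.toModuleEnd K (RestrictScalars K Λ M) a).lTensor R
  map_one' := by
    have h : Module.toModuleEnd K (RestrictScalars K Λ M) (1 : Λ) = LinearMap.id := by
      ext x; simp
    try dsimp only
    rw [h, LinearMap.lTensor_id]; rfl
  map_mul' a b := by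
    have h : Module.toModuleEnd K (RestrictScalars K Λ M) (a * b)
        = (Module.toModuleEnd K (RestrictScalars K Λ M) a) ∘ₗ
          (Module.toModuleEnd K (RestrictScalars K Λ M) b) := by
      ext x; simp [mul_smul]
    try dsimp only
    rw [h, LinearMap.lTensor_comp]; rfl
  map_zero' := by
    have h : Module.toModuleEnd K (RestrictScalars K Λ M) (0 : Λ) = 0 := by ext x; simp
    try dsimp only
    rw [h, LinearMap.lTensor_zero]
  map_add' a b := by
    have h : Module.toModuleEnd K (RestrictScalars K Λ M) (a + b)
        = Module.toModuleEnd K (RestrictScalars K Λ M) a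
          + Module.toModuleEnd K (RestrictScalars K Λ M) b := by
      ext x; simp [add_smul]
    try dsimp only
    rw [h, LinearMap.lTensor_add]

noncomputable instance tensorModModuleΛ : Module Λ (TensorMod K R Λ M) :=
  Module.compHom _ (tensorModEndHom K R Λ M)

lemma tensorMod_lambda_smul (a : Λ) (x : TensorMod K R Λ M) :
    a • x = (Module.toModuleEnd K (RestrictScalars K Λ M) a).lTensor R x := rfl

instance : IsScalarTower K Λ (TensorMod K R Λ M) := by
  constructor
  intro k a x
  rw [tensorMod_lambda_smul, tensorMod_lambda_smul]
  have h : Module.toModuleEnd K (RestrictScalars K Λ M) ((k • a : Λ))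
      = k • Module.toModuleEnd K (RestrictScalars K Λ M) a := by
    ext m
    show (k • a) • m = k • (a • m)
    rw [smul_assoc]
  rw [h, LinearMap.lTensor_smul]
  rfl

instance : SMulCommClass R Λ (TensorMod K R Λ M) := by
  constructor
  intro r a x
  induction x using TensorProduct.induction_on with
  | zero => simp
  | tmul s m =>
      rw [tensorMod_lambda_smul, TensorProduct.smul_tmul', LinearMap.lTensor_tmul,
        tensorMod_lambda_smul, LinearMap.lTensor_tmul, TensorProduct.smul_tmul']
  | add x y hx hy =>
      rw [smul_add, smul_add, hx, hy, ← smul_add, ← smul_add]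

noncomputable instance tensorModModule : Module (R ⊗[K] Λ) (TensorMod K R Λ M) :=
  TensorProduct.Algebra.module

end TensorMod

section TensorFunctor
variable (K R Λ : Type) [Field K] [Ring R] [Algebra K R] [Ring Λ] [Algebra K Λ]

/-- A `Λ`-linear map `f : M → N`, viewed as a `K`-linear map. -/
noncomputable def restrictMap {M N : Type} [AddCommGroup M] [Module Λ M]
    [AddCommGroup N] [Module Λ N] (f : M →ₗ[Λ] N) :
    RestrictScalars K Λ M →ₗ[K] RestrictScalars K Λ N where
  toFun m := f m
  map_add' x y := by exact map_add f x y
  map_smul' k x := by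
    show f ((algebraMap K Λ k) • _) = (algebraMap K Λ k) • f _
    exact map_smul f _ _

/-- The map `R ⊗ f : R ⊗ M → R ⊗ N` induced by a `Λ`-linear map `f`, as an
`(R ⊗[K] Λ)`-linear map. -/
noncomputable def tensorModMap {M N : Type} [AddCommGroup M] [Module Λ M]
    [AddCommGroup N] [Module Λ N] (f : M →ₗ[Λ] N) :
    TensorMod K R Λ M →ₗ[R ⊗[K] Λ] TensorMod K R Λ N where
  toFun := LinearMap.lTensor R (restrictMap K Λ f)
  map_add' x y := by simp
  map_smul' s x := by
    dsimp only [RingHom.id_apply]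
    induction s using TensorProduct.induction_on with
    | zero => rw [zero_smul, zero_smul, map_zero]
    | add s t hs ht => rw [add_smul, add_smul, map_add, hs, ht]
    | tmul r a =>
        rw [TensorProduct.Algebra.smul_def, TensorProduct.Algebra.smul_def]
        induction x using TensorProduct.induction_on with
        | zero => simp
        | add x y hx hy => rw [smul_add, smul_add, map_add, map_add, hx, hy, smul_add, smul_add]
        | tmul u m =>
            rw [tensorMod_lambda_smul, LinearMap.lTensor_tmul, TensorProduct.smul_tmul',
              LinearMap.lTensor_tmul, LinearMap.lTensor_tmul, tensorMod_lambda_smul,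
              LinearMap.lTensor_tmul, TensorProduct.smul_tmul']
            show (r • u) ⊗ₜ[K] (restrictMap K Λ f (a • m)) = (r • u) ⊗ₜ[K] (a • restrictMap K Λ f m)
            congr 1
            show f (a • m) = a • f m
            exact map_smul f _ _

lemma restrictMap_id {M : Type} [AddCommGroup M] [Module Λ M] :
    restrictMap K Λ (LinearMap.id : M →ₗ[Λ] M) = LinearMap.id := by
  ext x; rfl

lemma restrictMap_comp {M N P : Type} [AddCommGroup M] [Module Λ M] [AddCommGroup N]
    [Module Λ N] [AddCommGroup P] [Module Λ P] (f : M →ₗ[Λ] N) (g : N →ₗ[Λ] P) :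
    restrictMap K Λ (g ∘ₗ f) = restrictMap K Λ g ∘ₗ restrictMap K Λ f := by
  ext x; rfl

/-- The base change functor `- ⊗_K R : mod Λ → mod (R ⊗_K Λ)` (tensoring over `K` with
`R`). -/
noncomputable def tensorFunctor : ModuleCat.{0} Λ ⥤ ModuleCat.{0} (R ⊗[K] Λ) where
  obj M := ModuleCat.of _ (TensorMod K R Λ M)
  map {M N} f := ModuleCat.ofHom
    (tensorModMap K R Λ f.hom : TensorMod K R Λ M →ₗ[R ⊗[K] Λ] TensorMod K R Λ N)
  map_id M := by
    ext x
    show LinearMap.lTensor R (restrictMap K Λ (𝟙 M : M ⟶ M).hom) x = x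
    rw [show ((𝟙 M : M ⟶ M).hom : _ →ₗ[Λ] _) = LinearMap.id from rfl, restrictMap_id,
      LinearMap.lTensor_id]
    rfl
  map_comp {M N P} f g := by
    ext x
    show LinearMap.lTensor R (restrictMap K Λ (f ≫ g).hom) x = _
    rw [show ((f ≫ g : M ⟶ P).hom : _ →ₗ[Λ] _) = g.hom ∘ₗ f.hom from rfl,
      restrictMap_comp, LinearMap.lTensor_comp]
    rfl

noncomputable instance : (tensorFunctor K R Λ).Additive where
  map_add := by
    intro M N f g
    ext x
    show LinearMap.lTensor R (restrictMap K Λ (f + g).hom) x = _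
    have h : restrictMap K Λ (f + g).hom = restrictMap K Λ f.hom + restrictMap K Λ g.hom := by
      ext; rfl
    rw [h, LinearMap.lTensor_add]
    rfl
end TensorFunctor

/-!
Write `E = End_Λ(M)`. The map `R ⊗ E → End_{R⊗Λ}(R ⊗ M)`, `r ⊗ f ↦ (s ⊗ m ↦ rs ⊗ f m)`, is
bijective because `R` is free of finite rank over `K`: an `(R ⊗ Λ)`-endomorphism is determined by
its restriction to `1 ⊗ M`, whose coordinates in a basis of `R` are `Λ`-endomorphisms of `M`.

As `K` is algebraically closed and `R` is local and finite dimensional, `R = K ⊕ 𝔪` with `𝔪`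
nilpotent. Hence `R ⊗ E → E`, `r ⊗ e ↦ φ(r) e` is surjective with nil kernel `𝔪 ⊗ E`, and a ring
mapping onto a local ring with nil kernel is local. A local ring has no idempotents but `0` and `1`.
-/

theorem isLocalHom_of_surjective_of_isNilpotent_sub {A B : Type*} [Ring A] [Semiring B]
    (f : A →+* B) (hf : Function.Surjective f) (hnil : ∀ x y, f x = f y → IsNilpotent (x - y)) :
    IsLocalHom f where
  map_nonunit a ha := by
    obtain ⟨c, hc⟩ := hf ↑ha.unit⁻¹
    have hunit : ∀ x, f x = 1 → IsUnit x := fun x hx => by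
      simpa using (hnil x 1 (hx.trans f.map_one.symm)).isUnit_add_one
    obtain ⟨u, hu⟩ := hunit (a * c) (by rw [map_mul, hc, IsUnit.mul_val_inv])
    obtain ⟨v, hv⟩ := hunit (c * a) (by rw [map_mul, hc, IsUnit.val_inv_mul])
    refine isUnit_iff_exists_and_exists.mpr ⟨⟨c * ↑u⁻¹, ?_⟩, ⟨↑v⁻¹ * c, ?_⟩⟩
    · rw [← mul_assoc, ← hu, Units.mul_inv]
    · rw [mul_assoc, ← hv, Units.inv_mul]

theorem IsLocalRing.eq_zero_or_eq_one_of_isIdempotentElem {A : Type*} [Ring A] [IsLocalRing A]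
    {e : A} (he : IsIdempotentElem e) : e = 0 ∨ e = 1 := by
  rcases isUnit_or_isUnit_of_add_one (add_sub_cancel e 1) with h | h
  · exact Or.inr (h.mul_left_cancel (by rw [he.eq, mul_one]))
  · exact Or.inl ((h.mul_right_eq_zero).mp he.one_sub_mul_self)

theorem IsLocalRing.exists_algHom_sub_mem_maximalIdeal (K R : Type*) [Field K] [IsAlgClosed K]
    [CommRing R] [IsLocalRing R] [Algebra K R] [Algebra.IsIntegral K R] :
    ∃ φ : R →ₐ[K] K, ∀ r, r - algebraMap K R (φ r) ∈ maximalIdeal R := by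
  let e : K ≃ₐ[K] R ⧸ maximalIdeal R :=
    AlgEquiv.ofBijective (Algebra.ofId K _) IsAlgClosed.algebraMap_bijective_of_isIntegral
  refine ⟨e.symm.toAlgHom.comp (Ideal.Quotient.mkₐ K _), fun r => ?_⟩
  rw [← Ideal.Quotient.eq, ← Ideal.Quotient.mkₐ_eq_mk K, AlgHom.commutes]
  exact (e.apply_symm_apply _).symm

namespace TensorProduct

open scoped Pointwise

variable {K R E : Type*} [CommSemiring K] [CommSemiring R] [Algebra K R] [Semiring E] [Algebra K E]

theorem image2_tmul_pow_subset (I : Ideal R) (n : ℕ) :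
    Set.image2 (· ⊗ₜ[K] ·) (I : Set R) (Set.univ : Set E) ^ n ⊆
      Set.image2 (· ⊗ₜ[K] ·) ((I ^ n : Ideal R) : Set R) Set.univ := by
  induction n with
  | zero =>
    rw [pow_zero, Set.one_subset]
    exact ⟨1, by simp, 1, trivial, rfl⟩
  | succ n ih =>
    rintro _ ⟨_, hx, _, ⟨r, hr, e, -, rfl⟩, rfl⟩
    obtain ⟨s, hs, f, -, rfl⟩ := ih hx
    exact ⟨s * r, pow_succ I n ▸ Ideal.mul_mem_mul hs hr, f * e, trivial,
      (Algebra.TensorProduct.tmul_mul_tmul s r f e).symm⟩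

theorem isNilpotent_of_mem_span_image2_tmul {I : Ideal R} (hI : IsNilpotent I) {x : R ⊗[K] E}
    (hx : x ∈ Submodule.span K (Set.image2 (· ⊗ₜ[K] ·) (I : Set R) (Set.univ : Set E))) :
    IsNilpotent x := by
  obtain ⟨n, hn⟩ := hI
  refine ⟨n, ?_⟩
  have hpow := Submodule.pow_mem_pow _ hx n
  rw [Submodule.span_pow] at hpow
  refine (Submodule.mem_bot K).mp (Submodule.span_le.mpr ?_ hpow)
  intro _ hz
  obtain ⟨r, hr, e, -, rfl⟩ := image2_tmul_pow_subset I n hz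
  rw [hn, Submodule.zero_eq_bot, Submodule.bot_coe, Set.mem_singleton_iff] at hr
  simp [hr]

end TensorProduct

open IsLocalRing in
theorem isLocalRing_tensorProduct_of_isAlgClosed (K R E : Type*) [Field K] [IsAlgClosed K]
    [CommRing R] [IsLocalRing R] [Algebra K R] [Module.Finite K R]
    [Semiring E] [Algebra K E] [IsLocalRing E] : IsLocalRing (R ⊗[K] E) := by
  obtain ⟨φ, hφ⟩ := exists_algHom_sub_mem_maximalIdeal K R
  let π : R ⊗[K] E →ₐ[K] E :=
    (Algebra.TensorProduct.lid K E).toAlgHom.comp (Algebra.TensorProduct.map φ (AlgHom.id K E))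
  have hπ : ∀ r e, π (r ⊗ₜ e) = φ r • e := fun _ _ => rfl
  have hπ_surj : Function.Surjective π := fun e => ⟨1 ⊗ₜ e, by rw [hπ, map_one, one_smul]⟩
  have hsub : ∀ x, x - 1 ⊗ₜ π x ∈
      Submodule.span K (Set.image2 (· ⊗ₜ[K] ·) (maximalIdeal R : Set R) (Set.univ : Set E)) := by
    intro x
    induction x using TensorProduct.induction_on with
    | zero => simp
    | tmul r e =>
      refine Submodule.subset_span ⟨r - algebraMap K R (φ r), hφ r, e, trivial, ?_⟩
      beta_reduce
      rw [hπ, TensorProduct.tmul_smul, TensorProduct.sub_tmul, Algebra.algebraMap_eq_smul_one,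
        TensorProduct.smul_tmul']
    | add x y hx hy =>
      rw [map_add, TensorProduct.tmul_add, add_sub_add_comm]
      exact add_mem hx hy
  have : IsArtinianRing R := IsArtinianRing.of_finite K R
  have hm : IsNilpotent (maximalIdeal R) := by
    rw [← jacobson_eq_maximalIdeal ⊥ bot_ne_top]
    exact IsArtinianRing.isNilpotent_jacobson_bot
  have : IsLocalHom π.toRingHom := isLocalHom_of_surjective_of_isNilpotent_sub _ hπ_surj
    fun x y hxy => TensorProduct.isNilpotent_of_mem_span_image2_tmul hm <| by
      simpa only [show π x = π y from hxy, sub_sub_sub_cancel_right] using sub_mem (hsub x) (hsub y)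
  exact π.toRingHom.domain_isLocalRing

namespace TensorProduct.Algebra

attribute [local instance] TensorProduct.Algebra.module

section

variable {R A B M : Type*} [CommSemiring R] [AddCommMonoid M] [Module R M]
  [Semiring A] [Semiring B] [Module A M] [Module B M] [Algebra R A] [Algebra R B]
  [IsScalarTower R A M] [IsScalarTower R B M] [SMulCommClass A B M]

theorem isScalarTower : IsScalarTower R (A ⊗[R] B) M :=
  ⟨fun r x m => LinearMap.map_smul₂ moduleAux r x m⟩

theorem smulCommClass : SMulCommClass (A ⊗[R] B) R M :=
  ⟨fun x r m => (moduleAux x).map_smul r m⟩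

end

theorem smulCommClass_left {R A B M : Type*} [CommSemiring R] [AddCommMonoid M] [Module R M]
    [CommSemiring A] [Semiring B] [Module A M] [Module B M] [Algebra R A] [Algebra R B]
    [IsScalarTower R A M] [IsScalarTower R B M] [SMulCommClass A B M] :
    SMulCommClass A (A ⊗[R] B) M where
  smul_comm a x m := by
    induction x using TensorProduct.induction_on with
    | zero => simp only [zero_smul, smul_zero]
    | tmul a' b => rw [smul_def, smul_def, smul_smul, mul_comm, ← smul_smul, smul_comm a b]
    | add x y hx hy => rw [add_smul, add_smul, smul_add, hx, hy]

end TensorProduct.Algebra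

namespace TensorMod

variable {K R Λ : Type} [Field K] [CommRing R] [Algebra K R] [Ring Λ] [Algebra K Λ]
variable {M : Type} [AddCommGroup M] [Module Λ M]

instance : IsScalarTower K (R ⊗[K] Λ) (TensorMod K R Λ M) := TensorProduct.Algebra.isScalarTower
instance : SMulCommClass (R ⊗[K] Λ) K (TensorMod K R Λ M) := TensorProduct.Algebra.smulCommClass
instance : SMulCommClass R (R ⊗[K] Λ) (TensorMod K R Λ M) := TensorProduct.Algebra.smulCommClass_left

theorem smul_tmul (a : Λ) (r : R) (m : RestrictScalars K Λ M) :
    a • (r ⊗ₜ[K] m : TensorMod K R Λ M) = r ⊗ₜ[K] (a • m) := rfl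

theorem tmul_one_smul (r : R) (x : TensorMod K R Λ M) : (r ⊗ₜ[K] (1 : Λ)) • x = r • x := by
  rw [TensorProduct.Algebra.smul_def, one_smul]

theorem one_tmul_smul (a : Λ) (x : TensorMod K R Λ M) : ((1 : R) ⊗ₜ[K] a) • x = a • x := by
  rw [TensorProduct.Algebra.smul_def, one_smul]

theorem end_map_smul (g : Module.End (R ⊗[K] Λ) (TensorMod K R Λ M)) (a : Λ)
    (x : TensorMod K R Λ M) : g (a • x) = a • g x := by
  rw [← one_tmul_smul, map_smul, one_tmul_smul]

theorem end_ext {g h : Module.End (R ⊗[K] Λ) (TensorMod K R Λ M)}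
    (H : ∀ m : RestrictScalars K Λ M, g (1 ⊗ₜ m) = h (1 ⊗ₜ m)) : g = h := by
  ext x
  induction x using TensorProduct.induction_on with
  | zero => rw [map_zero, map_zero]
  | tmul r m =>
    have hrm : r ⊗ₜ[K] m = (r ⊗ₜ[K] (1 : Λ)) • ((1 : R) ⊗ₜ[K] m : TensorMod K R Λ M) := by
      rw [tmul_one_smul, TensorProduct.smul_tmul', smul_eq_mul, mul_one]
    rw [hrm, map_smul, map_smul, H]
  | add x y hx hy => rw [map_add, map_add, hx, hy]

open TensorProduct in
theorem equivFinsuppOfBasisLeft_smul {ι : Type*} [DecidableEq ι] (b : Module.Basis ι K R)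
    (a : Λ) (x : TensorMod K R Λ M) (i : ι) :
    equivFinsuppOfBasisLeft b (a • x) i = a • equivFinsuppOfBasisLeft b x i := by
  induction x using TensorProduct.induction_on with
  | zero => simp
  | tmul r m => simp only [smul_tmul, equivFinsuppOfBasisLeft_apply_tmul_apply, smul_comm a]
  | add x y hx hy => simp only [smul_add, map_add, Finsupp.add_apply, hx, hy]

variable (K R Λ M)

noncomputable def endAlgHom :
    Module.End Λ (RestrictScalars K Λ M) →ₐ[K] Module.End (R ⊗[K] Λ) (TensorMod K R Λ M) where
  toFun f := tensorModMap K R Λ (show M →ₗ[Λ] M from f)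
  map_one' := end_ext fun _ => rfl
  map_mul' _ _ := end_ext fun _ => rfl
  map_zero' := end_ext fun _ => TensorProduct.tmul_zero _ _
  map_add' _ _ := end_ext fun _ => TensorProduct.tmul_add _ _ _
  commutes' k := end_ext fun m => by exact TensorProduct.tmul_smul k (1 : R) m

theorem endAlgHom_tmul (f : Module.End Λ (RestrictScalars K Λ M)) (r : R)
    (m : RestrictScalars K Λ M) : endAlgHom K R Λ M f (r ⊗ₜ m) = r ⊗ₜ f m := rfl

theorem commute_lsmul_endAlgHom (r : R) (f : Module.End Λ (RestrictScalars K Λ M)) :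
    Commute (Algebra.lsmul K (R ⊗[K] Λ) (TensorMod K R Λ M) r) (endAlgHom K R Λ M f) :=
  end_ext fun m => by
    simp only [Module.End.mul_apply, Algebra.lsmul_apply, endAlgHom_tmul,
      TensorProduct.smul_tmul', smul_eq_mul, mul_one]

noncomputable def tensorEndAlgHom :
    R ⊗[K] Module.End Λ (RestrictScalars K Λ M) →ₐ[K] Module.End (R ⊗[K] Λ) (TensorMod K R Λ M) :=
  Algebra.TensorProduct.lift _ _ (commute_lsmul_endAlgHom K R Λ M)

theorem tensorEndAlgHom_tmul_one_tmul (r : R) (f : Module.End Λ (RestrictScalars K Λ M))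
    (m : RestrictScalars K Λ M) : tensorEndAlgHom K R Λ M (r ⊗ₜ f) (1 ⊗ₜ m) = r ⊗ₜ f m := by
  rw [tensorEndAlgHom, Algebra.TensorProduct.lift_tmul, Module.End.mul_apply, endAlgHom_tmul,
    Algebra.lsmul_apply, TensorProduct.smul_tmul', smul_eq_mul, mul_one]

open TensorProduct in
theorem equivFinsuppOfBasisLeft_tensorEndAlgHom {ι : Type*} [DecidableEq ι]
    (b : Module.Basis ι K R) (t : R ⊗[K] Module.End Λ (RestrictScalars K Λ M))
    (m : RestrictScalars K Λ M) (i : ι) :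
    equivFinsuppOfBasisLeft b (tensorEndAlgHom K R Λ M t (1 ⊗ₜ m)) i =
      equivFinsuppOfBasisLeft b t i m := by
  induction t using TensorProduct.induction_on with
  | zero => simp
  | tmul r f => simp only [tensorEndAlgHom_tmul_one_tmul, equivFinsuppOfBasisLeft_apply_tmul_apply,
      LinearMap.smul_apply]
  | add s t hs ht => simp only [map_add, LinearMap.add_apply, Finsupp.add_apply, hs, ht]

theorem tensorEndAlgHom_bijective [Module.Finite K R] :
    Function.Bijective (tensorEndAlgHom K R Λ M) := by
  let b := Module.finBasis K R
  let cX := TensorProduct.equivFinsuppOfBasisLeft (N := RestrictScalars K Λ M) b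
  let cE := TensorProduct.equivFinsuppOfBasisLeft (N := Module.End Λ (RestrictScalars K Λ M)) b
  have key := equivFinsuppOfBasisLeft_tensorEndAlgHom K R Λ M b
  constructor
  · refine (injective_iff_map_eq_zero _).mpr fun t ht => cE.map_eq_zero_iff.mp ?_
    ext i m
    simpa [ht] using (key t m i).symm
  · intro g
    let F : _ → Module.End Λ (RestrictScalars K Λ M) := fun i =>
      { toFun m := cX (g (1 ⊗ₜ m)) i
        map_add' m m' := by simp only [TensorProduct.tmul_add, map_add, Finsupp.add_apply]
        map_smul' a m := by
          rw [RingHom.id_apply, ← smul_tmul, end_map_smul, equivFinsuppOfBasisLeft_smul] }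
    refine ⟨cE.symm (Finsupp.equivFunOnFinite.symm F),
      end_ext fun m => cX.injective (Finsupp.ext fun i => ?_)⟩
    rw [key, LinearEquiv.apply_symm_apply]
    rfl

end TensorMod

section S17
variable (K R Λ : Type) [Field K] [IsAlgClosed K]
  [CommRing R] [Algebra K R] [FiniteDimensional K R] [IsLocalRing R]
  [Ring Λ] [Algebra K Λ] [FiniteDimensional K Λ]

theorem end_tensor_local
    (M : Type) [AddCommGroup M] [Module Λ M]
    (hM : IsLocalRing (Module.End Λ M)) :
    Nonempty (Module.End (R ⊗[K] Λ) (TensorMod K R Λ M) ≃+* R ⊗[K] Module.End Λ (RestrictScalars K Λ M)) ∧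
    IsLocalRing (R ⊗[K] Module.End Λ (RestrictScalars K Λ M)) ∧
    IsLocalRing (Module.End (R ⊗[K] Λ) (TensorMod K R Λ M)) ∧
    (∀ e : Module.End (R ⊗[K] Λ) (TensorMod K R Λ M),
      e ∘ₗ e = e → e = 0 ∨ e = 1) := by
  have : IsLocalRing (Module.End Λ (RestrictScalars K Λ M)) := hM
  let ψ := AlgEquiv.ofBijective _ (TensorMod.tensorEndAlgHom_bijective K R Λ M)
  have hTensor : IsLocalRing (R ⊗[K] Module.End Λ (RestrictScalars K Λ M)) :=
    isLocalRing_tensorProduct_of_isAlgClosed K R _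
  have hEnd : IsLocalRing (Module.End (R ⊗[K] Λ) (TensorMod K R Λ M)) :=
    (RingHomClass.toRingHom ψ.symm).domain_isLocalRing
  exact ⟨⟨ψ.symm.toRingEquiv⟩, hTensor, hEnd,
    fun e he => IsLocalRing.eq_zero_or_eq_one_of_isIdempotentElem (e := e) he⟩

end S17
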